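/- arXiv:2209.13037 — 5 statements merged into one kernel-verified Lean document; each statement's English description precedes it below -/
import Mathlib

section
/- Let G be a finite group, let γ, δ ∈ G, suppose γ is a commutator (i.e. γ = ⁅α, β⁆ for some α, β ∈ G), and suppose δ generates the same cyclic subgroup as γ (i.e. Subgroup.zpowers δ = Subgroup.zpowers γ). Then δ is a commutator, i.e. there exist σ, τ ∈ G with δ = ⁅σ, τ⁆. -/
set_option linter.unusedSectionVars false

open scoped commutatorElement

open Finset MonoidAlgebra

namespace HondaAux

section Basic

variable {G : Type*} [Group G] [Fintype G] [DecidableEq G]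

/-- conjugacy class of `g` as a finset -/
def cl (g : G) : Finset G := univ.filter (fun x => IsConj g x)

lemma mem_cl {g x : G} : x ∈ cl g ↔ IsConj g x := by simp [cl]

lemma self_mem_cl (g : G) : g ∈ cl g := mem_cl.2 (IsConj.refl g)

lemma cl_eq_cl {g h : G} (h1 : IsConj g h) : cl g = cl h := by
  ext x
  simp only [mem_cl]
  exact ⟨fun hx => h1.symm.trans hx, fun hx => h1.trans hx⟩

lemma card_cl_pos (g : G) : 0 < (cl g).card :=
  Finset.card_pos.2 ⟨g, self_mem_cl g⟩

lemma isConj_inv {a b : G} (h : IsConj a b) : IsConj a⁻¹ b⁻¹ := by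
  obtain ⟨c, hc⟩ := isConj_iff.1 h
  exact isConj_iff.2 ⟨c, by rw [← hc]; group⟩

lemma isConj_pow {a b : G} (n : ℕ) (h : IsConj a b) : IsConj (a ^ n) (b ^ n) := by
  obtain ⟨c, hc⟩ := isConj_iff.1 h
  refine isConj_iff.2 ⟨c, ?_⟩
  rw [← hc, conj_pow]

/-- the count of witnesses `w` with `g * w` conjugate to `w` -/
def Mc (g : G) : ℕ := (univ.filter fun w => IsConj (g * w) w).card

lemma Mc_le_card (g : G) : Mc g ≤ Fintype.card G :=
  (Finset.card_filter_le _ _).trans (le_of_eq (Finset.card_univ))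

lemma Mc_conj {g h : G} (hgh : IsConj g h) : Mc g = Mc h := by
  obtain ⟨c, hc⟩ := isConj_iff.1 hgh
  refine Finset.card_nbij' (fun w => c * w * c⁻¹) (fun w => c⁻¹ * w * c) ?_ ?_ ?_ ?_
  · intro w hw
    simp only [Finset.mem_coe, Finset.mem_filter, Finset.mem_univ, true_and] at hw ⊢
    have h1 : h * (c * w * c⁻¹) = c * (g * w) * c⁻¹ := by rw [← hc]; group
    rw [h1]
    have h2 : IsConj (c * (g * w) * c⁻¹) (g * w) := isConj_iff.2 ⟨c⁻¹, by group⟩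
    have h3 : IsConj w (c * w * c⁻¹) := isConj_iff.2 ⟨c, rfl⟩
    exact (h2.trans hw).trans h3
  · intro w hw
    simp only [Finset.mem_coe, Finset.mem_filter, Finset.mem_univ, true_and] at hw ⊢
    have h1 : g * (c⁻¹ * w * c) = c⁻¹ * (h * w) * c := by rw [← hc]; group
    rw [h1]
    have h2 : IsConj (c⁻¹ * (h * w) * c) (h * w) := isConj_iff.2 ⟨c, by group⟩
    have h3 : IsConj w (c⁻¹ * w * c) := isConj_iff.2 ⟨c⁻¹, by group⟩
    exact (h2.trans hw).trans h3
  · intro w _; group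
  · intro w _; group

lemma Mc_pos_of_commutator {g : G} (h : ∃ a b : G, g = ⁅a, b⁆) : 0 < Mc g := by
  obtain ⟨a, b, rfl⟩ := h
  refine Finset.card_pos.2 ⟨b, ?_⟩
  simp only [Finset.mem_filter, Finset.mem_univ, true_and]
  refine isConj_iff.2 ⟨a⁻¹, ?_⟩
  simp only [commutatorElement_def]
  group

lemma commutator_of_Mc_pos {g : G} (h : 0 < Mc g) : ∃ a b : G, g = ⁅a, b⁆ := by
  obtain ⟨w, hw⟩ := Finset.card_pos.1 h
  simp only [Finset.mem_filter, Finset.mem_univ, true_and] at hw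
  obtain ⟨c, hc⟩ := isConj_iff.1 hw
  refine ⟨c⁻¹, w, ?_⟩
  simp only [commutatorElement_def]
  have h2 : g = c⁻¹ * (c * (g * w) * c⁻¹) * c⁻¹⁻¹ * w⁻¹ := by group
  rw [hc] at h2
  exact h2

lemma Mc_alt (z : G) : Mc z = (univ.filter fun u => IsConj u (z⁻¹ * u)).card := by
  refine Finset.card_nbij' (fun y => z * y) (fun u => z⁻¹ * u) ?_ ?_ ?_ ?_
  · intro y hy
    simp only [Finset.mem_filter, Finset.mem_univ, true_and] at hy ⊢
    simpa [mul_assoc] using hy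
  · intro u hu
    simp only [Finset.mem_filter, Finset.mem_univ, true_and] at hu ⊢
    simpa [mul_assoc] using hu
  · intro y _; group
  · intro u _; group

end Basic

section Rot

variable {H : Type*} [Group H]

/-- rotation of a tuple -/
def rot {n : ℕ} (k : Fin (n + 1)) (F : Fin (n + 1) → H) : Fin (n + 1) → H :=
  fun i => F (i + k)

lemma rot_rot {n : ℕ} (k l : Fin (n + 1)) (F : Fin (n + 1) → H) :
    rot k (rot l F) = rot (k + l) F := by
  funext i
  simp only [rot, add_assoc]

lemma rot_zero {n : ℕ} (F : Fin (n + 1) → H) : rot 0 F = F := by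
  funext i; simp [rot]

lemma prod_rot_one {n : ℕ} (F : Fin (n + 1) → H) :
    (List.ofFn (rot 1 F)).prod = (F 0)⁻¹ * (List.ofFn F).prod * F 0 := by
  have h1 : List.ofFn F = F 0 :: List.ofFn fun i : Fin n => F i.succ := List.ofFn_succ (f := F)
  have hcs : ∀ i : Fin n, i.castSucc + 1 = i.succ := fun i => Fin.coeSucc_eq_succ
  have h2 : List.ofFn (rot 1 F) = (List.ofFn fun i : Fin n => F i.succ).concat (F 0) := by
    rw [List.ofFn_succ' (rot 1 F)]
    congr 1
    · apply congrArg List.ofFn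
      funext i
      show F (i.castSucc + 1) = F i.succ
      rw [hcs]
    · show F (Fin.last n + 1) = F 0
      rw [Fin.last_add_one]
  rw [h2, List.prod_concat, h1, List.prod_cons]
  group

open Fin.NatCast in
lemma prod_rot_isConj {n : ℕ} (k : Fin (n + 1)) (F : Fin (n + 1) → H) :
    IsConj (List.ofFn F).prod (List.ofFn (rot k F)).prod := by
  have key : ∀ m : ℕ, IsConj (List.ofFn F).prod (List.ofFn (rot (m : Fin (n + 1)) F)).prod := by
    intro m
    induction m with
    | zero => rw [Nat.cast_zero, rot_zero]
    | succ m ih =>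
      have hc1 : ((m + 1 : ℕ) : Fin (n + 1)) = 1 + (m : Fin (n + 1)) := by
        rw [Nat.cast_add, Nat.cast_one]; exact add_comm _ _
      have h1 : rot ((m + 1 : ℕ) : Fin (n + 1)) F = rot 1 (rot (m : Fin (n + 1)) F) := by
        rw [rot_rot, hc1]
      rw [h1]
      refine ih.trans ?_
      refine isConj_iff.2 ⟨(rot (m : Fin (n + 1)) F 0)⁻¹, ?_⟩
      rw [prod_rot_one]
      group
  have := key k.val
  rwa [Fin.cast_val_eq_self] at this

end Rot

section Alg

variable {G : Type*} [Group G] [Fintype G] [DecidableEq G] (p : ℕ) [Fact p.Prime]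

/-- class sum in the group algebra over `ZMod p` -/
noncomputable def KC (g : G) : MonoidAlgebra (ZMod p) G := ∑ x ∈ cl g, single x 1

instance charP_MA : CharP (MonoidAlgebra (ZMod p) G) p := by
  refine charP_of_injective_algebraMap (R := ZMod p) ?_ p
  intro a b hab
  have h := congrArg (fun f : MonoidAlgebra (ZMod p) G => f.coeff (1 : G)) hab
  simpa [Algebra.algebraMap_eq_smul_one, MonoidAlgebra.one_def, MonoidAlgebra.coeff_smul_apply,
    MonoidAlgebra.coeff_single, Finsupp.single_eq_same] using h

lemma sum_single_apply {ι : Type*} (S : Finset ι) (π : ι → G) (z : G)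
    [DecidablePred fun i => π i = z] :
    (∑ i ∈ S, single (π i) (1 : ZMod p)).coeff z = ((S.filter fun i => π i = z).card : ZMod p) := by
  rw [MonoidAlgebra.coeff_sum, Finsupp.finset_sum_apply, ← Finset.sum_boole]
  exact Finset.sum_congr rfl fun i _ => by rw [MonoidAlgebra.coeff_single, Finsupp.single_apply]

lemma KC_apply (g z : G) : (KC p g).coeff z = if IsConj g z then 1 else 0 := by
  rw [KC, sum_single_apply, Finset.filter_eq' (cl g) z]
  by_cases h : IsConj g z
  · have hz : z ∈ cl g := mem_cl.2 h
    rw [if_pos hz, if_pos h, Finset.card_singleton, Nat.cast_one]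
  · have hz : z ∉ cl g := fun hz => h (mem_cl.1 hz)
    rw [if_neg hz, if_neg h, Finset.card_empty, Nat.cast_zero]

lemma single_commute_KC (x g : G) : Commute (single x (1 : ZMod p)) (KC p g) := by
  show single x (1 : ZMod p) * KC p g = KC p g * single x (1 : ZMod p)
  rw [KC, Finset.mul_sum, Finset.sum_mul]
  refine Finset.sum_nbij' (fun u => x * u * x⁻¹) (fun u => x⁻¹ * u * x) ?_ ?_ ?_ ?_ ?_
  · intro u hu
    rw [mem_cl] at hu ⊢
    exact hu.trans (isConj_iff.2 ⟨x, rfl⟩)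
  · intro u hu
    rw [mem_cl] at hu ⊢
    exact hu.trans (isConj_iff.2 ⟨x⁻¹, by group⟩)
  · intro u _; group
  · intro u _; group
  · intro u _
    rw [single_mul_single, single_mul_single]
    congr 1
    group

lemma commute_KC (g h : G) : Commute (KC p g) (KC p h) := by
  rw [KC]
  exact Commute.sum_left _ _ _ fun x _ => single_commute_KC p x h

lemma sum_pow_char_commute {A : Type*} [Semiring A] [CharP A p] {ι : Type*}
    (s : Finset ι) (f : ι → A)
    (hc : ∀ i ∈ s, ∀ j ∈ s, Commute (f i) (f j)) :
    (∑ i ∈ s, f i) ^ p = ∑ i ∈ s, f i ^ p := by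
  classical
  induction s using Finset.induction_on with
  | empty => simp [zero_pow (Fact.out (p := p.Prime)).ne_zero]
  | @insert a s' has ih =>
    rw [Finset.sum_insert has, Finset.sum_insert has,
      add_pow_char_of_commute p (Commute.sum_right _ _ _ fun j hj =>
        hc a (Finset.mem_insert_self a s') j (Finset.mem_insert_of_mem hj)),
      ih fun i hi j hj =>
        hc i (Finset.mem_insert_of_mem hi) j (Finset.mem_insert_of_mem hj)]

lemma coprime_card (hcard : Fintype.card G < p) : (Nat.card G).Coprime p := by
  rw [Nat.card_eq_fintype_card, Nat.coprime_comm]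
  refine ((Fact.out (p := p.Prime)).coprime_iff_not_dvd).2 fun hdvd => ?_
  exact absurd (Nat.le_of_dvd Fintype.card_pos hdvd) (not_le.2 hcard)

lemma pow_bijective (hcard : Fintype.card G < p) :
    Function.Bijective (fun g : G => g ^ p) :=
  (coprime_card p hcard).pow_left_bijective

lemma isConj_pow_iff (hcard : Fintype.card G < p) {a b : G} :
    IsConj (a ^ p) (b ^ p) ↔ IsConj a b := by
  constructor
  · intro h
    obtain ⟨c, hc⟩ := isConj_iff.1 h
    have h1 : (c * a * c⁻¹) ^ p = b ^ p := by rw [conj_pow, hc]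
    exact isConj_iff.2 ⟨c, (pow_bijective p hcard).injective h1⟩
  · exact isConj_pow p

lemma cl_pow_image (hcard : Fintype.card G < p) (g : G) :
    (cl g).image (fun x => x ^ p) = cl (g ^ p) := by
  ext y
  simp only [Finset.mem_image, mem_cl]
  constructor
  · rintro ⟨x, hx, rfl⟩
    exact isConj_pow p hx
  · intro hy
    obtain ⟨c, hc⟩ := isConj_iff.1 hy
    exact ⟨c * g * c⁻¹, isConj_iff.2 ⟨c, rfl⟩, by rw [conj_pow, hc]⟩

lemma card_cl_pow (hcard : Fintype.card G < p) (g : G) :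
    (cl (g ^ p)).card = (cl g).card := by
  rw [← cl_pow_image p hcard g,
    Finset.card_image_of_injective _ (pow_bijective p hcard).injective]

lemma cast_card_cl_ne_zero (hcard : Fintype.card G < p) (g : G) :
    ((cl g).card : ZMod p) ≠ 0 := by
  intro h
  rw [ZMod.natCast_eq_zero_iff] at h
  have h1 : (cl g).card ≤ Fintype.card G :=
    (Finset.card_filter_le _ _).trans (le_of_eq Finset.card_univ)
  exact absurd (Nat.le_of_dvd (card_cl_pos g) h) (not_le.2 (lt_of_le_of_lt h1 hcard))

lemma ofFn_snoc_prod {n : ℕ} (F : Fin n → G) (x : G) :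
    (List.ofFn (Fin.snoc F x : Fin (n + 1) → G)).prod = (List.ofFn F).prod * x := by
  rw [List.ofFn_succ' (Fin.snoc F x : Fin (n + 1) → G)]
  simp only [Fin.snoc_castSucc, Fin.snoc_last, List.prod_concat]

lemma KC_pow_eq (g : G) (n : ℕ) :
    (KC p g) ^ n
      = ∑ F ∈ Fintype.piFinset (fun _ : Fin n => cl g), single (List.ofFn F).prod 1 := by
  induction n with
  | zero =>
    rw [pow_zero]
    have huniv : (Fintype.piFinset fun _ : Fin 0 => cl g) = Finset.univ := by
      ext F
      simp [Fintype.mem_piFinset]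
    rw [huniv]
    rw [Finset.sum_unique_nonempty Finset.univ _ Finset.univ_nonempty]
    simp [MonoidAlgebra.one_def, List.ofFn_zero]
  | succ n ih =>
    rw [pow_succ, ih, Finset.sum_mul]
    have hstep : ∀ F : Fin n → G,
        (single (List.ofFn F).prod (1 : ZMod p)) * KC p g
          = ∑ x ∈ cl g, single ((List.ofFn F).prod * x) 1 := by
      intro F
      rw [KC, Finset.mul_sum]
      exact Finset.sum_congr rfl fun x _ => by rw [single_mul_single, one_mul]
    rw [Finset.sum_congr rfl fun F _ => hstep F, ← Finset.sum_product']
    refine Finset.sum_nbij' (fun Fx => Fin.snoc Fx.1 Fx.2)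
      (fun F => (Fin.init F, F (Fin.last n))) ?_ ?_ ?_ ?_ ?_
    · rintro ⟨F, x⟩ hFx
      rw [Finset.mem_product] at hFx
      rw [Fintype.mem_piFinset]
      intro i
      dsimp only
      refine Fin.lastCases ?_ ?_ i
      · rw [Fin.snoc_last]; exact hFx.2
      · intro j
        rw [Fin.snoc_castSucc]
        exact Fintype.mem_piFinset.1 hFx.1 j
    · intro F hF
      rw [Finset.mem_product]
      constructor
      · rw [Fintype.mem_piFinset]
        intro j
        dsimp only
        exact Fintype.mem_piFinset.1 hF j.castSucc
      · exact Fintype.mem_piFinset.1 hF (Fin.last n)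
    · rintro ⟨F, x⟩ _
      dsimp only
      rw [Fin.init_snoc, Fin.snoc_last]
    · intro F _
      dsimp only
      exact Fin.snoc_init_self F
    · rintro ⟨F, x⟩ _
      dsimp only
      rw [ofFn_snoc_prod]

lemma ofFn_conj_prod {n : ℕ} (c : G) (F : Fin n → G) :
    (List.ofFn fun i => c * F i * c⁻¹).prod = c * (List.ofFn F).prod * c⁻¹ := by
  have h1 : (fun i => c * F i * c⁻¹) = (fun x => c * x * c⁻¹) ∘ F := rfl
  have h2 : (List.ofFn ((MulAut.conj c) ∘ F)).prod = (MulAut.conj c) (List.ofFn F).prod := by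
    rw [← List.map_ofFn, List.prod_hom]
  simpa [MulAut.conj_apply, Function.comp_def] using h2

lemma tcnt_conj (g : G) {z z' : G} (hzz : IsConj z z') (n : ℕ) :
    ((Fintype.piFinset fun _ : Fin n => cl g).filter
        fun F => (List.ofFn F).prod = z).card
      = ((Fintype.piFinset fun _ : Fin n => cl g).filter
        fun F => (List.ofFn F).prod = z').card := by
  obtain ⟨c, hc⟩ := isConj_iff.1 hzz
  refine Finset.card_nbij' (fun F => fun i => c * F i * c⁻¹) (fun F => fun i => c⁻¹ * F i * c)
    ?_ ?_ ?_ ?_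
  · intro F hF
    rw [Finset.mem_coe, Finset.mem_filter] at hF ⊢
    refine ⟨?_, ?_⟩
    · rw [Fintype.mem_piFinset]
      intro i
      exact mem_cl.2 ((mem_cl.1 (Fintype.mem_piFinset.1 hF.1 i)).trans (isConj_iff.2 ⟨c, rfl⟩))
    · rw [ofFn_conj_prod, hF.2, hc]
  · intro F hF
    rw [Finset.mem_coe, Finset.mem_filter] at hF ⊢
    refine ⟨?_, ?_⟩
    · rw [Fintype.mem_piFinset]
      intro i
      exact mem_cl.2 ((mem_cl.1 (Fintype.mem_piFinset.1 hF.1 i)).trans (isConj_iff.2 ⟨c⁻¹, by group⟩))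
    · have h3 : (List.ofFn fun i => c⁻¹ * F i * c).prod = c⁻¹ * (List.ofFn F).prod * c := by
        have := ofFn_conj_prod (G := G) c⁻¹ F
        simpa using this
      rw [h3, hF.2, ← hc]
      group
  · intro F _
    funext i
    dsimp only
    group
  · intro F _
    funext i
    dsimp only
    group

lemma rot_count_modEq (C : Finset G) (z₀ : G) :
    ((Fintype.piFinset fun _ : Fin p => C).filter
        fun F => IsConj z₀ (List.ofFn F).prod).card
      ≡ (C.filter fun x => IsConj z₀ (x ^ p)).card [MOD p] := by
  obtain ⟨n, rfl⟩ : ∃ n, p = n + 1 :=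
    ⟨p - 1, (Nat.succ_pred_eq_of_pos (Fact.out (p := p.Prime)).pos).symm⟩
  set X := (Fintype.piFinset fun _ : Fin (n + 1) => C).filter
      (fun F => IsConj z₀ (List.ofFn F).prod) with hX
  have hXmem : ∀ (k : Fin (n + 1)) (F : Fin (n + 1) → G), F ∈ X → rot k F ∈ X := by
    intro k F hF
    rw [hX, Finset.mem_filter] at hF ⊢
    refine ⟨?_, hF.2.trans (prod_rot_isConj k F)⟩
    rw [Fintype.mem_piFinset]
    intro i
    exact Fintype.mem_piFinset.1 hF.1 (i + k)
  letI act : MulAction (Multiplicative (Fin (n + 1))) {F // F ∈ X} :=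
    { smul := fun k F => ⟨rot k.toAdd F.1, hXmem k.toAdd F.1 F.2⟩
      one_smul := fun F => Subtype.ext (rot_zero F.1)
      mul_smul := fun k l F => Subtype.ext (by
        show rot (k * l).toAdd F.1 = rot k.toAdd (rot l.toAdd F.1)
        rw [rot_rot]
        rfl) }
  have hsmul_def : ∀ (k : Multiplicative (Fin (n + 1))) (F : {F // F ∈ X}),
      (k • F).1 = rot k.toAdd F.1 := fun _ _ => rfl
  have hpg : IsPGroup (n + 1) (Multiplicative (Fin (n + 1))) := by
    refine IsPGroup.of_card (n := 1) ?_
    rw [pow_one, Nat.card_congr (Multiplicative.toAdd (α := Fin (n + 1))),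
      Nat.card_eq_fintype_card, Fintype.card_fin]
  have hmod := hpg.card_modEq_card_fixedPoints {F // F ∈ X}
  have h1 : Nat.card {F // F ∈ X} = X.card := by
    rw [Nat.card_eq_fintype_card, Fintype.card_coe]
  have hconst : ∀ (F : {F // F ∈ X}),
      F ∈ MulAction.fixedPoints (Multiplicative (Fin (n + 1))) {F // F ∈ X} →
      ∀ i : Fin (n + 1), F.1 i = F.1 0 := by
    intro F hF i
    have h2 := hF (Multiplicative.ofAdd i)
    have h3 := congrFun (congrArg Subtype.val h2) 0
    rw [hsmul_def] at h3
    have h4 : (Multiplicative.ofAdd i).toAdd = i := rfl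
    rw [h4] at h3
    show F.1 i = F.1 0
    rw [← h3, rot, zero_add]
  have hconstprod : ∀ x : G, (List.ofFn fun _ : Fin (n + 1) => x).prod = x ^ (n + 1) := by
    intro x
    rw [List.ofFn_const, List.prod_replicate]
  have h2 : Nat.card (MulAction.fixedPoints (Multiplicative (Fin (n + 1))) {F // F ∈ X})
      = (C.filter fun x => IsConj z₀ (x ^ (n + 1))).card := by
    haveI : Fintype (MulAction.fixedPoints (Multiplicative (Fin (n + 1))) {F // F ∈ X}) :=
      Fintype.ofFinite _
    rw [← Fintype.card_coe (C.filter fun x => IsConj z₀ (x ^ (n + 1)))]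
    rw [Nat.card_eq_fintype_card]
    refine Fintype.card_congr ⟨?_, ?_, ?_, ?_⟩
    · -- toFun
      refine fun F => ⟨F.1.1 0, ?_⟩
      have hmem := Finset.mem_filter.1 F.1.2
      rw [Finset.mem_filter]
      refine ⟨Fintype.mem_piFinset.1 hmem.1 0, ?_⟩
      have h5 : F.1.1 = fun _ => F.1.1 0 := funext (hconst F.1 F.2)
      have h6 := hmem.2
      rw [h5, hconstprod] at h6
      exact h6
    · -- invFun
      refine fun x => ⟨⟨fun _ => x.1, ?_⟩, ?_⟩
      · have hx := Finset.mem_filter.1 x.2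
        refine Finset.mem_filter.2 ⟨Fintype.mem_piFinset.2 fun _ => hx.1, ?_⟩
        rw [hconstprod]
        exact hx.2
      · intro k
        refine Subtype.ext ?_
        rw [hsmul_def]
        funext i
        rfl
    · -- left_inv
      intro F
      refine Subtype.ext (Subtype.ext ?_)
      exact (funext (hconst F.1 F.2)).symm
    · -- right_inv
      intro x
      rfl
  rw [← h1, ← h2]
  exact hmod

lemma KC_pow_card (hcard : Fintype.card G < p) (g : G) :
    (KC p g) ^ p = KC p (g ^ p) := by
  apply MonoidAlgebra.ext
  apply Finsupp.ext
  intro z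
  rw [KC_pow_eq, sum_single_apply, KC_apply]
  have hconst : ∀ z' ∈ cl z,
      ((Fintype.piFinset fun _ : Fin p => cl g).filter fun F => (List.ofFn F).prod = z').card
        = ((Fintype.piFinset fun _ : Fin p => cl g).filter fun F => (List.ofFn F).prod = z).card :=
    fun z' hz' => (tcnt_conj g (mem_cl.1 hz') p).symm
  have hfib : ((Fintype.piFinset fun _ : Fin p => cl g).filter
      fun F => IsConj z (List.ofFn F).prod).card
      = ∑ z' ∈ cl z, ((Fintype.piFinset fun _ : Fin p => cl g).filter
          fun F => (List.ofFn F).prod = z').card := by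
    rw [Finset.card_eq_sum_card_fiberwise (f := fun F => (List.ofFn F).prod) (t := cl z)
      (fun F hF => mem_cl.2 (Finset.mem_filter.1 hF).2)]
    refine Finset.sum_congr rfl fun z' hz' => ?_
    congr 1
    rw [Finset.filter_filter]
    apply Finset.filter_congr
    intro F _
    constructor
    · rintro ⟨_, h2⟩
      exact h2
    · intro h2
      refine ⟨?_, h2⟩
      show IsConj z (List.ofFn F).prod
      rw [h2]
      exact mem_cl.1 hz'
  have hsum : ∑ z' ∈ cl z, ((Fintype.piFinset fun _ : Fin p => cl g).filter
      fun F => (List.ofFn F).prod = z').card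
      = (cl z).card * ((Fintype.piFinset fun _ : Fin p => cl g).filter
          fun F => (List.ofFn F).prod = z).card := by
    rw [Finset.sum_congr rfl hconst, Finset.sum_const, smul_eq_mul]
  have hmain := rot_count_modEq p (cl g) z
  rw [hfib, hsum] at hmain
  have hcast : ((cl z).card : ZMod p)
      * ((Fintype.piFinset fun _ : Fin p => cl g).filter
          fun F => (List.ofFn F).prod = z).card
      = (((cl g).filter fun x => IsConj z (x ^ p)).card : ZMod p) := by
    have h8 := (ZMod.natCast_eq_natCast_iff _ _ _).2 hmain
    push_cast at h8
    exact h8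
  by_cases hconj : IsConj (g ^ p) z
  · rw [if_pos hconj]
    have hfull : (cl g).filter (fun x => IsConj z (x ^ p)) = cl g :=
      Finset.filter_true_of_mem fun x hx =>
        hconj.symm.trans (isConj_pow p (mem_cl.1 hx))
    have hclz : (cl z).card = (cl g).card := by
      rw [← cl_eq_cl hconj]
      exact card_cl_pow p hcard g
    rw [hfull, hclz] at hcast
    exact mul_left_cancel₀ (cast_card_cl_ne_zero p hcard g)
      (hcast.trans (mul_one ((cl g).card : ZMod p)).symm)
  · rw [if_neg hconj]
    have hempty : (cl g).filter (fun x => IsConj z (x ^ p)) = ∅ := by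
      rw [Finset.filter_eq_empty_iff]
      intro x hx hzx
      exact hconj ((isConj_pow p (mem_cl.1 hx)).trans hzx.symm)
    rw [hempty] at hcast
    simp only [Finset.card_empty, Nat.cast_zero] at hcast
    exact (mul_eq_zero.1 hcast).resolve_left (cast_card_cl_ne_zero p hcard z)

/-- the central element `∑ Mc x · x` of the group algebra -/
noncomputable def theta : MonoidAlgebra (ZMod p) G := ∑ x : G, single x (Mc x : ZMod p)

lemma theta_apply (z : G) : (theta p (G := G)).coeff z = (Mc z : ZMod p) := by
  rw [theta, MonoidAlgebra.coeff_sum, Finsupp.finset_sum_apply]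
  simp only [MonoidAlgebra.coeff_single, Finsupp.single_apply]
  rw [Finset.sum_ite_eq' Finset.univ z (fun x => (Mc x : ZMod p))]
  simp

lemma filter_isConj_eq_cl (z : G) :
    Finset.univ.filter (fun w => IsConj w z) = cl z := by
  ext w
  simp only [Finset.mem_filter, Finset.mem_univ, true_and, mem_cl]
  exact isConj_comm

lemma theta_eq_grouped (hcard : Fintype.card G < p) :
    theta p (G := G) = ∑ w : G, ((((cl w).card : ZMod p)⁻¹ * Mc w) • KC p w) := by
  apply MonoidAlgebra.ext
  apply Finsupp.ext
  intro z
  rw [theta_apply, MonoidAlgebra.coeff_sum, Finsupp.finset_sum_apply]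
  have h1 : ∀ w : G, ((((cl w).card : ZMod p)⁻¹ * Mc w) • KC p w).coeff z
      = if IsConj w z then ((cl w).card : ZMod p)⁻¹ * Mc w else 0 := by
    intro w
    rw [MonoidAlgebra.coeff_smul_apply, KC_apply, smul_eq_mul]
    by_cases h : IsConj w z
    · rw [if_pos h, if_pos h, mul_one]
    · rw [if_neg h, if_neg h, mul_zero]
  rw [Finset.sum_congr rfl fun w _ => h1 w, ← Finset.sum_filter, filter_isConj_eq_cl]
  have h3 : ∀ w ∈ cl z, ((cl w).card : ZMod p)⁻¹ * (Mc w : ZMod p)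
      = ((cl z).card : ZMod p)⁻¹ * (Mc z : ZMod p) := by
    intro w hw
    rw [← cl_eq_cl (mem_cl.1 hw), ← Mc_conj (mem_cl.1 hw)]
  rw [Finset.sum_congr rfl h3, Finset.sum_const, nsmul_eq_mul, ← mul_assoc,
    mul_inv_cancel₀ (cast_card_cl_ne_zero p hcard z), one_mul]

lemma KC_mul_KC_inv_apply (w z : G) :
    (KC p w * KC p w⁻¹).coeff z
      = ((((cl w) ×ˢ (cl w⁻¹)).filter fun q => q.1 * q.2 = z).card : ZMod p) := by
  rw [KC, KC, Finset.sum_mul_sum]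
  simp only [single_mul_single, one_mul]
  rw [← Finset.sum_product']
  exact sum_single_apply p (cl w ×ˢ cl w⁻¹) (fun q => q.1 * q.2) z

lemma cnt_eq (w z : G) :
    (((cl w) ×ˢ (cl w⁻¹)).filter fun q => q.1 * q.2 = z).card
      = (Finset.univ.filter fun u => IsConj w u ∧ IsConj w (z⁻¹ * u)).card := by
  refine Finset.card_nbij' (fun q => q.1) (fun u => (u, u⁻¹ * z)) ?_ ?_ ?_ ?_
  · rintro ⟨u, v⟩ hq
    rw [Finset.mem_coe, Finset.mem_filter, Finset.mem_product] at hq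
    obtain ⟨⟨h1, h2⟩, h3⟩ := hq
    rw [Finset.mem_coe, Finset.mem_filter]
    refine ⟨Finset.mem_univ _, mem_cl.1 h1, ?_⟩
    have hv : v = u⁻¹ * z := by rw [← h3]; group
    have h5 := isConj_inv (mem_cl.1 h2)
    rw [inv_inv] at h5
    have hv2 : v⁻¹ = z⁻¹ * u := by rw [hv]; group
    rwa [hv2] at h5
  · intro u hu
    rw [Finset.mem_coe, Finset.mem_filter] at hu
    obtain ⟨_, h1, h2⟩ := hu
    rw [Finset.mem_coe, Finset.mem_filter, Finset.mem_product]
    have h3 := isConj_inv h2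
    have h4 : (z⁻¹ * u)⁻¹ = u⁻¹ * z := by group
    rw [h4] at h3
    exact ⟨⟨mem_cl.2 h1, mem_cl.2 h3⟩, by dsimp only; group⟩
  · rintro ⟨u, v⟩ hq
    rw [Finset.mem_coe, Finset.mem_filter] at hq
    have h3 := hq.2
    dsimp only at h3 ⊢
    rw [← h3]
    simp [inv_mul_cancel_left]
  · intro u _
    rfl

lemma theta_eq_factored (hcard : Fintype.card G < p) :
    theta p (G := G) = ∑ w : G, (((cl w).card : ZMod p)⁻¹ • (KC p w * KC p w⁻¹)) := by
  apply MonoidAlgebra.ext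
  apply Finsupp.ext
  intro z
  rw [theta_apply, MonoidAlgebra.coeff_sum, Finsupp.finset_sum_apply]
  have h1 : ∀ w : G, (((cl w).card : ZMod p)⁻¹ • (KC p w * KC p w⁻¹)).coeff z
      = ∑ u : G, if IsConj w u ∧ IsConj w (z⁻¹ * u) then ((cl w).card : ZMod p)⁻¹ else 0 := by
    intro w
    rw [MonoidAlgebra.coeff_smul_apply, KC_mul_KC_inv_apply, cnt_eq, smul_eq_mul,
      ← Finset.sum_boole, Finset.mul_sum]
    exact Finset.sum_congr rfl fun u _ => by rw [mul_ite, mul_one, mul_zero]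
  rw [Finset.sum_congr rfl fun w _ => h1 w, Finset.sum_comm]
  have h2 : ∀ u : G, (∑ w : G, if IsConj w u ∧ IsConj w (z⁻¹ * u)
      then ((cl w).card : ZMod p)⁻¹ else 0)
      = if IsConj u (z⁻¹ * u) then 1 else 0 := by
    intro u
    have h3 : ∀ w : G, (if IsConj w u ∧ IsConj w (z⁻¹ * u) then ((cl w).card : ZMod p)⁻¹ else 0)
        = if IsConj w u ∧ IsConj u (z⁻¹ * u) then ((cl u).card : ZMod p)⁻¹ else 0 := by
      intro w
      by_cases hw : IsConj w u
      · have e1 : cl w = cl u := cl_eq_cl hw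
        have e2 : IsConj w (z⁻¹ * u) ↔ IsConj u (z⁻¹ * u) :=
          ⟨fun h => hw.symm.trans h, fun h => hw.trans h⟩
        rw [e1]
        by_cases h4 : IsConj u (z⁻¹ * u)
        · rw [if_pos ⟨hw, e2.2 h4⟩, if_pos ⟨hw, h4⟩]
        · rw [if_neg (fun hh => h4 (e2.1 hh.2)), if_neg (fun hh => h4 hh.2)]
      · rw [if_neg (fun hh => hw hh.1), if_neg (fun hh => hw hh.1)]
    rw [Finset.sum_congr rfl fun w _ => h3 w]
    by_cases h4 : IsConj u (z⁻¹ * u)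
    · rw [if_pos h4]
      have h7 : ∀ w : G, (if IsConj w u ∧ IsConj u (z⁻¹ * u)
          then ((cl u).card : ZMod p)⁻¹ else 0)
          = if IsConj w u then ((cl u).card : ZMod p)⁻¹ else 0 := by
        intro w
        by_cases hw : IsConj w u
        · rw [if_pos ⟨hw, h4⟩, if_pos hw]
        · rw [if_neg (fun hh => hw hh.1), if_neg hw]
      rw [Finset.sum_congr rfl fun w _ => h7 w, ← Finset.sum_filter, filter_isConj_eq_cl,
        Finset.sum_const, nsmul_eq_mul, mul_inv_cancel₀ (cast_card_cl_ne_zero p hcard u)]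
    · rw [if_neg h4]
      exact Finset.sum_eq_zero fun w _ => if_neg (fun hh => h4 hh.2)
  rw [Finset.sum_congr rfl fun u _ => h2 u, Finset.sum_boole, Mc_alt]

lemma commute_terms (c d : ZMod p) (X Y : MonoidAlgebra (ZMod p) G)
    (h : Commute X Y) : Commute (c • X) (d • Y) := by
  rw [Algebra.smul_def, Algebra.smul_def]
  have halg : ∀ (r : ZMod p) (f : MonoidAlgebra (ZMod p) G),
      Commute ((algebraMap (ZMod p) (MonoidAlgebra (ZMod p) G)) r) f :=
    fun r f => Algebra.commutes r f
  exact Commute.mul_left (Commute.mul_right (halg c _) (halg c _))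
    (Commute.mul_right ((halg d X).symm) h)

lemma commute_KC_mul (i j : G) :
    Commute (KC p i * KC p i⁻¹) (KC p j * KC p j⁻¹) :=
  Commute.mul_left ((commute_KC p i j).mul_right (commute_KC p i j⁻¹))
    ((commute_KC p i⁻¹ j).mul_right (commute_KC p i⁻¹ j⁻¹))

lemma sum_pow_reindex {M : Type*} [AddCommMonoid M] (hcard : Fintype.card G < p) (t : G → M) :
    ∑ w : G, t (w ^ p) = ∑ w : G, t w :=
  Fintype.sum_bijective _ (pow_bijective p hcard) _ _ (fun w => rfl)

lemma theta_pow (hcard : Fintype.card G < p) :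
    (theta p (G := G)) ^ p = theta p (G := G) := by
  conv_lhs => rw [theta_eq_factored p hcard]
  rw [sum_pow_char_commute p _ _ (fun i _ j _ =>
    commute_terms p _ _ _ _ (commute_KC_mul p i j))]
  have h1 : ∀ w : G, (((cl w).card : ZMod p)⁻¹ • (KC p w * KC p w⁻¹)) ^ p
      = ((cl (w ^ p)).card : ZMod p)⁻¹ • (KC p (w ^ p) * KC p (w ^ p)⁻¹) := by
    intro w
    rw [smul_pow, Commute.mul_pow (commute_KC p w w⁻¹), KC_pow_card p hcard,
      KC_pow_card p hcard, ZMod.pow_card, inv_pow, card_cl_pow p hcard]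
  rw [Finset.sum_congr rfl fun w _ => h1 w,
    sum_pow_reindex p hcard (fun w => ((cl w).card : ZMod p)⁻¹ • (KC p w * KC p w⁻¹))]
  exact (theta_eq_factored p hcard).symm

lemma theta_pow_grouped (hcard : Fintype.card G < p) :
    (theta p (G := G)) ^ p
      = ∑ w : G, ((((cl w).card : ZMod p)⁻¹ * Mc w) • KC p (w ^ p)) := by
  conv_lhs => rw [theta_eq_grouped p hcard]
  rw [sum_pow_char_commute p _ _ (fun i _ j _ =>
    commute_terms p _ _ _ _ (commute_KC p i j))]
  refine Finset.sum_congr rfl fun w _ => ?_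
  rw [smul_pow, KC_pow_card p hcard, ZMod.pow_card]

lemma Mc_pow (hcard : Fintype.card G < p) (γ : G) : Mc (γ ^ p) = Mc γ := by
  have e2 : ((theta p (G := G)) ^ p).coeff (γ ^ p) = (Mc γ : ZMod p) := by
    rw [theta_pow_grouped p hcard, MonoidAlgebra.coeff_sum, Finsupp.finset_sum_apply]
    have h3 : ∀ w : G, ((((cl w).card : ZMod p)⁻¹ * Mc w) • KC p (w ^ p)).coeff (γ ^ p)
        = if IsConj w γ then ((cl w).card : ZMod p)⁻¹ * Mc w else 0 := by
      intro w
      rw [MonoidAlgebra.coeff_smul_apply, KC_apply, smul_eq_mul]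
      by_cases h : IsConj w γ
      · rw [if_pos ((isConj_pow_iff p hcard).2 h), if_pos h, mul_one]
      · rw [if_neg (fun hh => h ((isConj_pow_iff p hcard).1 hh)), if_neg h, mul_zero]
    rw [Finset.sum_congr rfl fun w _ => h3 w, ← Finset.sum_filter, filter_isConj_eq_cl]
    have h6 : ∀ w ∈ cl γ, ((cl w).card : ZMod p)⁻¹ * (Mc w : ZMod p)
        = ((cl γ).card : ZMod p)⁻¹ * (Mc γ : ZMod p) := by
      intro w hw
      rw [← cl_eq_cl (mem_cl.1 hw), ← Mc_conj (mem_cl.1 hw)]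
    rw [Finset.sum_congr rfl h6, Finset.sum_const, nsmul_eq_mul, ← mul_assoc,
      mul_inv_cancel₀ (cast_card_cl_ne_zero p hcard γ), one_mul]
  have h1 : ((Mc (γ ^ p) : ZMod p)) = (Mc γ : ZMod p) := by
    rw [← theta_apply p (γ ^ p), ← theta_pow p hcard, e2]
  have b1 : Mc (γ ^ p) < p := lt_of_le_of_lt (Mc_le_card _) hcard
  have b2 : Mc γ < p := lt_of_le_of_lt (Mc_le_card _) hcard
  have h2 := congrArg ZMod.val h1
  rwa [ZMod.val_cast_of_lt b1, ZMod.val_cast_of_lt b2] at h2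

end Alg

end HondaAux

/-- Honda's theorem: every finite group has the Honda property. -/
theorem finite_group_honda {G : Type*} [Group G] [Finite G] (γ δ : G)
    (hγ : ∃ α β : G, γ = ⁅α, β⁆)
    (hδ : Subgroup.zpowers δ = Subgroup.zpowers γ) :
    ∃ σ τ : G, δ = ⁅σ, τ⁆ := by
  classical
  cases nonempty_fintype G
  have hδγ : δ ∈ Subgroup.zpowers γ := by rw [← hδ]; exact Subgroup.mem_zpowers δ
  have hγδ : γ ∈ Subgroup.zpowers δ := by rw [hδ]; exact Subgroup.mem_zpowers γ
  obtain ⟨m, hm⟩ := (Submonoid.mem_powers_iff δ γ).1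
    (((isOfFinOrder_of_finite γ).mem_powers_iff_mem_zpowers).2 hδγ)
  obtain ⟨l, hl⟩ := (Submonoid.mem_powers_iff γ δ).1
    (((isOfFinOrder_of_finite δ).mem_powers_iff_mem_zpowers).2 hγδ)
  haveI : NeZero (orderOf γ) := ⟨(orderOf_pos γ).ne'⟩
  have hml : γ ^ (m * l) = γ ^ 1 := by rw [pow_mul, hm, hl, pow_one]
  have hmod : m * l ≡ 1 [MOD orderOf γ] := pow_eq_pow_iff_modEq.1 hml
  have hunit : IsUnit ((m : ZMod (orderOf γ))) := by
    refine IsUnit.of_mul_eq_one (l : ZMod (orderOf γ)) ?_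
    rw [← Nat.cast_mul, ← Nat.cast_one]
    exact (ZMod.natCast_eq_natCast_iff _ _ _).2 hmod
  obtain ⟨p, hpgt, hpp, hpm⟩ := Nat.forall_exists_prime_gt_and_eq_mod hunit (Fintype.card G)
  haveI : Fact p.Prime := ⟨hpp⟩
  have hgp : γ ^ p = δ := by
    rw [← hm]
    exact pow_eq_pow_iff_modEq.2 ((ZMod.natCast_eq_natCast_iff _ _ _).1 hpm)
  have h1 : 0 < HondaAux.Mc γ := HondaAux.Mc_pos_of_commutator hγ
  have h2 : HondaAux.Mc (γ ^ p) = HondaAux.Mc γ := HondaAux.Mc_pow p hpgt γ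
  refine HondaAux.commutator_of_Mc_pos ?_
  rw [← hgp, h2]
  exact h1
end

section
/- Let p be a prime and let k be the algebraic closure of the field with p elements, and let n be a natural number. Then the general linear group GL(n, k) is a locally finite group: every finitely generated subgroup of GL(n, k) is finite. -/
/-- `GL n k` is locally finite when `k` is the algebraic closure of a finite prime field. -/
theorem GL_algebraicClosure_ZMod_locally_finite (p : ℕ) [Fact p.Prime] (n : ℕ)
    (H : Subgroup (GL (Fin n) (AlgebraicClosure (ZMod p)))) (hH : H.FG) :
    Finite H := by
  classical
  obtain ⟨S, hS⟩ := hH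
  set k := AlgebraicClosure (ZMod p)
  -- the set of all entries of the generators and their inverses
  set s : Set k := ⋃ g ∈ (S : Set (GL (Fin n) k)), ⋃ i, ⋃ j,
    ({(g : Matrix (Fin n) (Fin n) k) i j, ((g⁻¹ : GL (Fin n) k) : Matrix (Fin n) (Fin n) k) i j} : Set k)
  have hsfin : s.Finite := by
    apply Set.Finite.biUnion S.finite_toSet
    intro g _
    exact Set.finite_iUnion fun i => Set.finite_iUnion fun j => (Set.finite_singleton _).insert _
  set F : IntermediateField (ZMod p) k := IntermediateField.adjoin (ZMod p) s
  have : Algebra.IsAlgebraic (ZMod p) k := inferInstance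
  have hFD : FiniteDimensional (ZMod p) F := by
    haveI := hsfin.to_subtype
    apply IntermediateField.finiteDimensional_adjoin
    intro x _
    exact (Algebra.IsIntegral.isIntegral x)
  have hFfin : Finite F := Module.finite_of_finite (ZMod p)
  have hGLfin : Finite (GL (Fin n) F) := by
    have : Finite (Matrix (Fin n) (Fin n) F) := by infer_instance
    exact Finite.of_injective (Units.val) Units.val_injective
  -- the map GL n F → GL n k
  let φ : GL (Fin n) F →* GL (Fin n) k :=
    Matrix.GeneralLinearGroup.map (algebraMap F k)
  have hle : H ≤ φ.range := by
    rw [← hS, Subgroup.closure_le]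
    intro g hg
    -- entries of g and g⁻¹ lie in F
    have hmem : ∀ i j, (g : Matrix (Fin n) (Fin n) k) i j ∈ F ∧
        ((g⁻¹ : GL (Fin n) k) : Matrix (Fin n) (Fin n) k) i j ∈ F := by
      intro i j
      constructor <;> apply IntermediateField.subset_adjoin <;>
        · refine Set.mem_biUnion hg ?_
          refine Set.mem_iUnion.2 ⟨i, Set.mem_iUnion.2 ⟨j, ?_⟩⟩
          simp
    set M : Matrix (Fin n) (Fin n) F := fun i j => ⟨(g : Matrix (Fin n) (Fin n) k) i j, (hmem i j).1⟩
    set N : Matrix (Fin n) (Fin n) F := fun i j =>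
      ⟨((g⁻¹ : GL (Fin n) k) : Matrix (Fin n) (Fin n) k) i j, (hmem i j).2⟩
    have hmap : ∀ (A : Matrix (Fin n) (Fin n) F) i j,
        (A.map (algebraMap F k)) i j = (A i j : k) := fun A i j => rfl
    have hinj : Function.Injective
        (fun A : Matrix (Fin n) (Fin n) F => A.map (algebraMap F k)) := by
      intro A B h
      ext i j
      have := congrFun (congrFun h i) j
      exact this
    have hMmap : M.map (algebraMap F k) = (g : Matrix (Fin n) (Fin n) k) := rfl
    have hNmap : N.map (algebraMap F k) = ((g⁻¹ : GL (Fin n) k) : Matrix (Fin n) (Fin n) k) := rfl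
    have hMN : M * N = 1 := by
      apply hinj
      simp only [Matrix.map_mul, hMmap, hNmap, Matrix.map_one _ (map_zero _) (map_one _)]
      exact Units.mul_inv g
    have hNM : N * M = 1 := by
      apply hinj
      simp only [Matrix.map_mul, hMmap, hNmap, Matrix.map_one _ (map_zero _) (map_one _)]
      exact Units.inv_mul g
    refine ⟨⟨M, N, hMN, hNM⟩, ?_⟩
    apply Units.ext
    exact hMmap
  have : (H : Set (GL (Fin n) k)).Finite := by
    have hrange : (Set.range φ).Finite := Set.finite_range φ
    refine hrange.subset ?_
    intro x hx
    exact hle hx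
  exact this.to_subtype
end

section
/- Let G be a profinite group (a compact, Hausdorff, totally disconnected topological group) and let δ ∈ G. Suppose that for every open normal subgroup N of G of finite index, the image of δ in the quotient group G/N is a commutator. Then δ is a commutator in G: there exist σ, τ ∈ G with δ = ⁅σ, τ⁆. -/
open scoped commutatorElement

/-- In a profinite group, if the image of `δ` in every finite quotient by an open normal
subgroup of finite index is a commutator, then `δ` is a commutator. -/
theorem profinite_commutator_of_forall_quotient {G : Type*} [Group G] [TopologicalSpace G]
    [IsTopologicalGroup G] [CompactSpace G] [T2Space G] [TotallyDisconnectedSpace G]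
    (δ : G)
    (h : ∀ (N : Subgroup G) (hN : N.Normal), IsOpen (N : Set G) → N.FiniteIndex →
      haveI := hN
      ∃ σ τ : G ⧸ N, (QuotientGroup.mk δ : G ⧸ N) = ⁅σ, τ⁆) :
    ∃ σ τ : G, δ = ⁅σ, τ⁆ := by
  let I := {N : Subgroup G // N.Normal ∧ IsOpen (N : Set G)}
  let C : I → Set (G × G) := fun N => {p | δ⁻¹ * ⁅p.1, p.2⁆ ∈ N.1}
  have hfin : ∀ N : I, N.1.FiniteIndex := fun N =>
    haveI := N.1.quotient_finite_of_isOpen N.2.2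
    N.1.finiteIndex_of_finite_quotient
  have hCclosed : ∀ N : I, IsClosed (C N) := by
    intro N
    have hN : IsClosed (N.1 : Set G) := Subgroup.isClosed_of_isOpen _ N.2.2
    have hcont : Continuous fun p : G × G => δ⁻¹ * ⁅p.1, p.2⁆ := by
      simp only [commutatorElement_def]
      fun_prop
    exact hN.preimage hcont
  have hCne : ∀ N : I, (C N).Nonempty := by
    intro N
    haveI := N.2.1
    obtain ⟨σ, τ, hστ⟩ := h N.1 N.2.1 N.2.2 (hfin N)
    obtain ⟨a, rfl⟩ := QuotientGroup.mk_surjective σ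
    obtain ⟨b, rfl⟩ := QuotientGroup.mk_surjective τ
    refine ⟨(a, b), ?_⟩
    show δ⁻¹ * ⁅a, b⁆ ∈ N.1
    rw [← QuotientGroup.eq_one_iff (N := N.1)]
    have : (QuotientGroup.mk (δ⁻¹ * ⁅a, b⁆) : G ⧸ N.1)
        = (QuotientGroup.mk δ : G ⧸ N.1)⁻¹ * ⁅(QuotientGroup.mk a : G ⧸ N.1), (QuotientGroup.mk b : G ⧸ N.1)⁆ := by
      simp [commutatorElement_def]
    rw [this, hστ, inv_mul_cancel]
  have hdir : Directed (· ⊇ ·) C := by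
    intro N M
    refine ⟨⟨N.1 ⊓ M.1, ?_, ?_⟩, ?_, ?_⟩
    · haveI := N.2.1; haveI := M.2.1; infer_instance
    · rw [Subgroup.coe_inf]; exact N.2.2.inter M.2.2
    · intro p hp; exact hp.1
    · intro p hp; exact hp.2
  haveI : Nonempty I := ⟨⟨⊤, inferInstance, by simp⟩⟩
  obtain ⟨p, hp⟩ := IsCompact.nonempty_iInter_of_directed_nonempty_isCompact_isClosed
    C hdir hCne (fun N => (hCclosed N).isCompact) hCclosed
  have key : δ⁻¹ * ⁅p.1, p.2⁆ = 1 := by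
    by_contra hx
    obtain ⟨W, hW, h1W, hWsub⟩ :=
      compact_exists_isClopen_in_isOpen (isOpen_compl_singleton (x := δ⁻¹ * ⁅p.1, p.2⁆))
        (by simpa using (Ne.symm hx))
    obtain ⟨H, hH⟩ := IsTopologicalGroup.exist_openNormalSubgroup_sub_clopen_nhds_of_one hW h1W
    have hmem : p ∈ C ⟨H.toSubgroup, H.isNormal', H.isOpen'⟩ :=
      Set.mem_iInter.mp hp _
    exact hWsub (hH hmem) rfl
  exact ⟨p.1, p.2, inv_mul_eq_one.mp key⟩
end

section
/- Let φ be a first-order sentence in the language of rings. Then φ is true in some algebraically closed field of characteristic 0 if and only if for all but finitely many primes p, φ is true in some algebraically closed field of characteristic p. -/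
open FirstOrder

/-- `K ⊨ φ`, where the field `K` is viewed as a structure for the language of rings. -/
def fieldSatisfies (K : Type*) [Field K] (φ : Language.ring.Sentence) : Prop :=
  letI := Ring.compatibleRingOfRing K
  K ⊨ φ

/-- Any two `CompatibleRing` instances over the same ring operations coincide. -/
lemma compatibleRing_eq {R : Type*} [Add R] [Mul R] [Neg R] [One R] [Zero R]
    (a b : FirstOrder.Ring.CompatibleRing R) : a = b := by
  rcases a with @⟨⟨fa, ra⟩, a1, a2, a3, a4, a5⟩
  rcases b with @⟨⟨fb, rb⟩, b1, b2, b3, b4, b5⟩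
  have hf : @fa = @fb := by
    funext n f x
    cases f
    · exact (a1 x).trans (b1 x).symm
    · exact (a2 x).trans (b2 x).symm
    · exact (a3 x).trans (b3 x).symm
    · exact (a4 x).trans (b4 x).symm
    · exact (a5 x).trans (b5 x).symm
  have hr : @ra = @rb := by
    funext n r
    exact r.elim
  subst hf
  subst hr
  rfl

/-- Transfer realization between two `CompatibleRing` instances. -/
lemma realize_compatibleRing_iff {R : Type*} [Add R] [Mul R] [Neg R] [One R] [Zero R]
    (a b : FirstOrder.Ring.CompatibleRing R) (φ : Language.ring.Sentence) :
    (@FirstOrder.Language.Sentence.Realize _ R a.toStructure φ) ↔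
      (@FirstOrder.Language.Sentence.Realize _ R b.toStructure φ) := by
  rw [compatibleRing_eq a b]

/-- For `p` prime or `0`, `φ` holds in some algebraically closed field of characteristic `p`
iff `ACF p ⊨ᵇ φ`. -/
lemma exists_field_iff_ACF_models (p : ℕ) (hp : p.Prime ∨ p = 0)
    (φ : Language.ring.Sentence) :
    (∃ (K : Type) (inst : Field K), letI := inst;
        IsAlgClosed K ∧ CharP K p ∧ fieldSatisfies K φ) ↔
      Language.Theory.ACF p ⊨ᵇ φ := by
  constructor
  · rintro ⟨K, inst, halg, hchar, hsat⟩
    letI := inst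
    letI := Ring.compatibleRingOfRing K
    haveI := halg
    haveI := hchar
    haveI : (Language.Theory.ACF p).Model K := inferInstance
    by_contra hn
    have hnot : Language.Theory.ACF p ⊨ᵇ φ.not :=
      ((Field.ACF_isComplete hp).2 φ).resolve_left hn
    have := hnot.realize_sentence K
    rw [Language.Sentence.realize_not] at this
    exact this hsat
  · intro h
    obtain ⟨M⟩ := Field.ACF_isSatisfiable hp
    letI := Field.fieldOfModelACF p M
    haveI := Field.modelField_of_modelACF p M
    letI crm := Field.compatibleRingOfModelField M
    haveI := Field.isAlgClosed_of_model_ACF p M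
    haveI := Field.charP_of_model_fieldOfChar p M
    refine ⟨M, inferInstance, inferInstance, inferInstance, ?_⟩
    have hM : M ⊨ φ := h.realize_sentence M
    exact (realize_compatibleRing_iff (Ring.compatibleRingOfRing M) crm φ).2 hM

/-- Lefschetz Principle, part (b): a sentence holds in some algebraically closed field of
characteristic 0 iff it holds in some algebraically closed field of characteristic `p` for
all but finitely many primes `p`. -/
theorem lefschetz_char_zero_iff (φ : Language.ring.Sentence) :
    (∃ (K : Type) (inst : Field K), letI := inst;
        IsAlgClosed K ∧ CharP K 0 ∧ fieldSatisfies K φ) ↔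
      {p : ℕ | p.Prime ∧ ¬ ∃ (K : Type) (inst : Field K), letI := inst;
        IsAlgClosed K ∧ CharP K p ∧ fieldSatisfies K φ}.Finite := by
  rw [exists_field_iff_ACF_models 0 (Or.inr rfl) φ]
  have hset : {p : ℕ | p.Prime ∧ ¬ ∃ (K : Type) (inst : Field K), letI := inst;
        IsAlgClosed K ∧ CharP K p ∧ fieldSatisfies K φ} =
      Subtype.val '' { q : Nat.Primes | Language.Theory.ACF (q : ℕ) ⊨ᵇ φ }ᶜ := by
    ext p
    simp only [Set.mem_setOf_eq, Set.mem_image, Set.mem_compl_iff]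
    constructor
    · rintro ⟨hp, hn⟩
      exact ⟨⟨p, hp⟩, fun hmem =>
        hn ((exists_field_iff_ACF_models p (Or.inl hp) φ).2 hmem), rfl⟩
    · rintro ⟨⟨q, hq⟩, hn, rfl⟩
      exact ⟨hq, by rwa [exists_field_iff_ACF_models q (Or.inl hq) φ]⟩
  rw [hset]
  constructor
  · intro h
    exact (Field.ACF_zero_realize_iff_finite_ACF_prime_not_realize.1 h).image _
  · intro h
    exact Field.ACF_zero_realize_iff_finite_ACF_prime_not_realize.2
      (Set.Finite.of_finite_image h (Subtype.val_injective.injOn))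
end

section
/- Let φ be a first-order sentence in the language of rings. If φ is true in the algebraic closure of the field with p elements for every prime p, then φ is true in every algebraically closed field. -/
open FirstOrder

/-- Corollary 2.2: a sentence true in the algebraic closure of `𝔽_p` for every prime `p`
is true in every algebraically closed field. -/
theorem lefschetz_of_algebraicClosure_ZMod (φ : Language.ring.Sentence)
    (h : ∀ (p : ℕ) (hp : p.Prime),
      haveI : Fact p.Prime := ⟨hp⟩
      fieldSatisfies (AlgebraicClosure (ZMod p)) φ)
    (K : Type*) [Field K] [IsAlgClosed K] :
    fieldSatisfies K φ := by
  have key : ∀ p : ℕ, p.Prime → Language.Theory.ACF p ⊨ᵇ φ := by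
    intro p hp
    haveI : Fact p.Prime := ⟨hp⟩
    letI := Ring.compatibleRingOfRing (AlgebraicClosure (ZMod p))
    haveI : CharP (AlgebraicClosure (ZMod p)) p :=
      charP_of_injective_algebraMap
        (RingHom.injective (algebraMap (ZMod p) (AlgebraicClosure (ZMod p)))) p
    rw [← (Field.ACF_isComplete (Or.inl hp)).realize_sentence_iff φ
      (AlgebraicClosure (ZMod p))]
    exact h p hp
  unfold fieldSatisfies
  letI := Ring.compatibleRingOfRing K
  obtain ⟨q, _⟩ := CharP.exists K
  have hq := CharP.char_is_prime_or_zero K q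
  haveI : (Language.Theory.ACF q).Model K := inferInstance
  have hKq : Language.Theory.ACF q ⊨ᵇ φ := by
    rcases hq with hq | rfl
    · exact key q hq
    · rw [Field.ACF_zero_realize_iff_infinite_ACF_prime_realize]
      have : { p : Nat.Primes | Language.Theory.ACF p ⊨ᵇ φ } = Set.univ :=
        Set.eq_univ_of_forall fun p => key p p.2
      rw [this]
      exact Set.infinite_univ
  exact hKq.realize_sentence K
end
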